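/- arXiv:2406.04112 — 2 statements merged into one kernel-verified Lean document; each statement's English description precedes it below -/
import Mathlib

section
/- Suppose η·(λ + ∏_{k≠l} ε_k²) ≤ 1 for every l ∈ {1,…,L}, and suppose λ > 0. Then for every l ∈ {1,…,L} and every t ≥ 0: 0 ≤ ρ_l(t) ≤ ε_l·(1 − ηλ)^t; in particular, since 0 ≤ 1 − ηλ < 1, ρ_l(t) → 0 as t → ∞. -/
open Matrix BigOperators Filter

noncomputable section

/-- Auxiliary: product of `k` consecutive matrices ending (on the right) at index `i`. -/
def chainAux {n : Type*} [Fintype n] [DecidableEq n]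
    (W : ℕ → Matrix n n ℝ) (i : ℕ) : ℕ → Matrix n n ℝ
  | 0 => 1
  | (k+1) => W (i + k) * chainAux W i k

/-- `chain W i j = W j * W (j-1) * ⋯ * W i`; equals `1` when `j < i` (empty product). -/
def chain {n : Type*} [Fintype n] [DecidableEq n]
    (W : ℕ → Matrix n n ℝ) (i j : ℕ) : Matrix n n ℝ :=
  chainAux W i (j + 1 - i)

/-- `blockDiag r m A B` is the `(2r+m)×(2r+m)` block-diagonal matrix `diag(A, B)`
with top-left block `A` (of size `2r×2r`) and bottom-right block `B` (of size `m×m`). -/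
def blockDiag (r m : ℕ) (A : Matrix (Fin (2*r)) (Fin (2*r)) ℝ)
    (B : Matrix (Fin m) (Fin m) ℝ) : Matrix (Fin (2*r + m)) (Fin (2*r + m)) ℝ :=
  Matrix.reindex finSumFinEquiv finSumFinEquiv (Matrix.fromBlocks A 0 0 B)

/-- The `d×2r` matrix formed by the first `2r` columns of a `(2r+m)×(2r+m)` matrix. -/
def cols1 (r m : ℕ) (U : Matrix (Fin (2*r + m)) (Fin (2*r + m)) ℝ) :
    Matrix (Fin (2*r + m)) (Fin (2*r)) ℝ :=
  fun i j => U i (Fin.castAdd m j)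

/-- The `d×m` matrix formed by the last `m` columns of a `(2r+m)×(2r+m)` matrix. -/
def cols2 (r m : ℕ) (U : Matrix (Fin (2*r + m)) (Fin (2*r + m)) ℝ) :
    Matrix (Fin (2*r + m)) (Fin m) ℝ :=
  fun i j => U i (Fin.natAdd (2*r) j)

/-- Squared Frobenius norm: `‖A‖_F² = trace(AᵀA)`. -/
def frobSq {p q : Type*} [Fintype p] [Fintype q] (A : Matrix p q ℝ) : ℝ :=
  Matrix.trace (Aᵀ * A)

/-- Frobenius norm: `‖A‖_F = √(trace(AᵀA))`. -/
def frobNorm {p q : Type*} [Fintype p] [Fintype q] (A : Matrix p q ℝ) : ℝ :=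
  Real.sqrt (Matrix.trace (Aᵀ * A))

/-! The step-size condition together with `ρ_k(t) ∈ [0, ε_k]` (kept by induction on `t`) gives
`∏_{k≠l} ρ_k(t)² ≤ ∏_{k≠l} ε_k²`, so each multiplier `1 - ηλ - η ∏_{k≠l} ρ_k(t)²` lies in
`[0, 1 - ηλ]`, and `ρ_l` decays at least geometrically with ratio `1 - ηλ`. -/

lemma one_sub_mul_nonneg_of_step {η lam P : ℝ} (hη : 0 ≤ η) (hP : 0 ≤ P)
    (hstep : η * (lam + P) ≤ 1) : 0 ≤ 1 - η * lam := by
  nlinarith [mul_nonneg hη hP]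

lemma mul_weightDecay_factor_mem {η lam p P x B : ℝ} (hη : 0 ≤ η) (hp : 0 ≤ p) (hpP : p ≤ P)
    (hstep : η * (lam + P) ≤ 1) (hx : 0 ≤ x) (hxB : x ≤ B) :
    0 ≤ x * (1 - η * lam - η * p) ∧ x * (1 - η * lam - η * p) ≤ B * (1 - η * lam) := by
  have hηp : 0 ≤ η * p := mul_nonneg hη hp
  have hfactor : 0 ≤ 1 - η * lam - η * p := by nlinarith [mul_le_mul_of_nonneg_left hpP hη]
  refine ⟨mul_nonneg hx hfactor, ?_⟩
  calc x * (1 - η * lam - η * p) ≤ B * (1 - η * lam - η * p) :=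
        mul_le_mul_of_nonneg_right hxB hfactor
    _ ≤ B * (1 - η * lam) := mul_le_mul_of_nonneg_left (by linarith) (hx.trans hxB)

section WeightDecay

variable {ι : Type*} [DecidableEq ι] {s : Finset ι} {ε : ι → ℝ} {η lam : ℝ} {ρ : ℕ → ι → ℝ}

theorem weightDecay_bound (hη : 0 ≤ η) (hlam : 0 ≤ lam) (hε : ∀ l ∈ s, 0 ≤ ε l)
    (hρ0 : ∀ l, ρ 0 l = ε l)
    (hρ : ∀ t l, ρ (t + 1) l = ρ t l * (1 - η * lam - η * ∏ k ∈ s.erase l, ρ t k ^ 2))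
    (hstep : ∀ l ∈ s, η * (lam + ∏ k ∈ s.erase l, ε k ^ 2) ≤ 1) (t : ℕ) :
    ∀ l ∈ s, 0 ≤ ρ t l ∧ ρ t l ≤ ε l * (1 - η * lam) ^ t := by
  induction t with
  | zero => exact fun l hl => by simpa [hρ0] using hε l hl
  | succ t ih =>
    have hρε : ∀ k ∈ s, 0 ≤ ρ t k ∧ ρ t k ≤ ε k := fun k hk => by
      have hr : 0 ≤ 1 - η * lam :=
        one_sub_mul_nonneg_of_step hη (Finset.prod_nonneg fun j _ => sq_nonneg (ε j)) (hstep k hk)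
      have hrt : (1 - η * lam) ^ t ≤ 1 := pow_le_one₀ hr (by nlinarith)
      exact ⟨(ih k hk).1, (ih k hk).2.trans (mul_le_of_le_one_right (hε k hk) hrt)⟩
    intro l hl
    have hprod : ∏ k ∈ s.erase l, ρ t k ^ 2 ≤ ∏ k ∈ s.erase l, ε k ^ 2 :=
      Finset.prod_le_prod (fun k _ => sq_nonneg _) fun k hk =>
        pow_le_pow_left₀ (hρε k (s.mem_of_mem_erase hk)).1 (hρε k (s.mem_of_mem_erase hk)).2 2
    rw [hρ, pow_succ, ← mul_assoc]
    exact mul_weightDecay_factor_mem hη (Finset.prod_nonneg fun k _ => sq_nonneg _) hprod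
      (hstep l hl) (ih l hl).1 (ih l hl).2

end WeightDecay

theorem statement14_general
    (L : ℕ) (hL : 1 ≤ L)
    (ε : ℕ → ℝ) (hε : ∀ l, 1 ≤ l → l ≤ L → 0 < ε l)
    (η lam : ℝ) (hη : 0 < η)
    (ρ : ℕ → ℕ → ℝ)
    (hρ0 : ∀ l, ρ 0 l = ε l)
    (hρ : ∀ t l, ρ (t+1) l
      = ρ t l * (1 - η * lam - η * ∏ k ∈ (Finset.Icc 1 L).erase l, (ρ t k)^2))
    (hstep : ∀ l, 1 ≤ l → l ≤ L →
      η * (lam + ∏ k ∈ (Finset.Icc 1 L).erase l, (ε k)^2) ≤ 1)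
    (hlam_pos : 0 < lam) :
    (∀ l, 1 ≤ l → l ≤ L → ∀ t : ℕ, 0 ≤ ρ t l ∧ ρ t l ≤ ε l * (1 - η * lam)^t) ∧
    (0 ≤ 1 - η * lam ∧ 1 - η * lam < 1) ∧
    (∀ l, 1 ≤ l → l ≤ L →
      Filter.Tendsto (fun t : ℕ => ρ t l) Filter.atTop (nhds 0)) := by
  have hbound (l : ℕ) (h1 : 1 ≤ l) (h2 : l ≤ L) (t : ℕ) :
      0 ≤ ρ t l ∧ ρ t l ≤ ε l * (1 - η * lam) ^ t :=
    weightDecay_bound hη.le hlam_pos.le (fun k hk => ((Finset.mem_Icc.1 hk).elim (hε k)).le)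
      hρ0 hρ (fun k hk => (Finset.mem_Icc.1 hk).elim (hstep k)) t l (Finset.mem_Icc.2 ⟨h1, h2⟩)
  have hr0 : 0 ≤ 1 - η * lam :=
    one_sub_mul_nonneg_of_step hη.le (Finset.prod_nonneg fun k _ => sq_nonneg (ε k))
      (hstep 1 le_rfl hL)
  have hr1 : 1 - η * lam < 1 := by nlinarith
  refine ⟨hbound, ⟨hr0, hr1⟩, fun l h1 h2 => ?_⟩
  have hgeom := (tendsto_pow_atTop_nhds_zero_of_lt_one hr0 hr1).const_mul (ε l)
  rw [mul_zero] at hgeom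
  exact squeeze_zero (fun t => (hbound l h1 h2 t).1) (fun t => (hbound l h1 h2 t).2) hgeom

/-- with weight decay `λ > 0` and step size satisfying
`η·(λ + ∏_{k≠l} ε_k²) ≤ 1` for every layer, `0 ≤ ρ_l(t) ≤ ε_l·(1−ηλ)ᵗ`; in
particular `0 ≤ 1 − ηλ < 1` and `ρ_l(t) → 0` as `t → ∞`. -/
theorem statement14
    (L : ℕ) (hL : 1 ≤ L)
    (ε : ℕ → ℝ) (hε : ∀ l, 1 ≤ l → l ≤ L → 0 < ε l)
    (η lam : ℝ) (hη : 0 < η) (hlam : 0 ≤ lam)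
    (ρ : ℕ → ℕ → ℝ)
    (hρ0 : ∀ l, ρ 0 l = ε l)
    (hρ : ∀ t l, ρ (t+1) l
      = ρ t l * (1 - η * lam - η * ∏ k ∈ (Finset.Icc 1 L).erase l, (ρ t k)^2))
    (hstep : ∀ l, 1 ≤ l → l ≤ L →
      η * (lam + ∏ k ∈ (Finset.Icc 1 L).erase l, (ε k)^2) ≤ 1)
    (hlam_pos : 0 < lam) :
    (∀ l, 1 ≤ l → l ≤ L → ∀ t : ℕ, 0 ≤ ρ t l ∧ ρ t l ≤ ε l * (1 - η * lam)^t) ∧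
    (0 ≤ 1 - η * lam ∧ 1 - η * lam < 1) ∧
    (∀ l, 1 ≤ l → l ≤ L →
      Filter.Tendsto (fun t : ℕ => ρ t l) Filter.atTop (nhds 0)) :=
  statement14_general L hL ε hε η lam hη ρ hρ0 hρ hstep hlam_pos
end
end

section
/- Let W_l(t) follow scaled-orthogonal initialization and the gradient-descent updates described in the context, with rank(Φ) ≤ r and m := d − 2r > 0, and suppose η·(λ + ∏_{k≠l} ε_k²) ≤ 1 for every l ∈ {1,…,L}. Then for every l ∈ {1,…,L} and every t ≥ 0 there exists a d×d real matrix A with rank(A) ≤ 2r such that ‖W_l(t) − A‖_F ≤ √m · ε_l · (1 − ηλ)^t, where ‖·‖_F denotes the Frobenius norm. In particular, if λ > 0 the Frobenius distance from W_l(t) to the set of matrices of rank at most 2r tends to 0 as t → ∞. -/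
/-!
Since `rank Φ ≤ r`, the kernels of `Φ` and `Φᵀ W_{L:1}(0)` meet in a subspace of dimension at least
`d - 2r = m`; let `V₀` be an orthonormal frame of it. Scaled-orthogonal initialization carries it
through the layers as frames `V_l = ε_l⁻¹ W_l(0) V_{l-1}`, with `W_l V_{l-1} = ε_l V_l` and
`W_lᵀ V_l = ε_l V_{l-1}`. As `Φ V₀ = 0` and `Φᵀ V_L = 0`, every gradient step keeps this alignment
and only multiplies the scale `c_l` of layer `l` by `1 - ηλ - η ∏_{k≠l} c_k²`, a factor that the
step-size condition keeps in `[0, 1 - ηλ]`. Cutting the frame out, `W_l(t) (1 - V_{l-1} V_{l-1}ᵀ)`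
has rank at most `d - m = 2r` and differs from `W_l(t)` by `c_l(t) V_l V_{l-1}ᵀ`, whose Frobenius
norm is `c_l(t) √m`.
-/

open Matrix BigOperators Filter

noncomputable section

open Finset

lemma prod_erase_Icc_one {M : Type*} [CommMonoid M] (f : ℕ → M) {l L : ℕ} (hl : l < L) :
    ∏ k ∈ (Icc 1 L).erase (l + 1), f k = (∏ k ∈ Ioc 0 l, f k) * ∏ k ∈ Ioc (l + 1) L, f k := by
  rw [← prod_union (disjoint_left.2 fun k hk hk' => by simp only [mem_Ioc] at hk hk'; omega)]
  congr 1
  ext k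
  simp only [mem_erase, mem_Icc, mem_union, mem_Ioc]
  omega

lemma prod_Ioc_mul_prod_Ioc_mul_prod_Ioc {M : Type*} [CommMonoid M] (f : ℕ → M) {l L : ℕ}
    (hl : l < L) :
    (∏ k ∈ Ioc 0 l, f k) * (∏ k ∈ Ioc 0 L, f k) * ∏ k ∈ Ioc (l + 1) L, f k
      = f (l + 1) * ∏ k ∈ (Icc 1 L).erase (l + 1), f k ^ 2 := by
  have hall : ∏ k ∈ Ioc 0 L, f k = f (l + 1) * ∏ k ∈ (Icc 1 L).erase (l + 1), f k :=
    (mul_prod_erase (Icc 1 L) f (mem_Icc.2 ⟨by omega, by omega⟩)).symm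
  rw [hall, prod_pow, prod_erase_Icc_one f hl, sq]
  ac_rfl

section Chain

variable {n : Type*} [Fintype n] [DecidableEq n]

lemma chain_of_lt (W : ℕ → Matrix n n ℝ) {i j : ℕ} (h : j < i) : chain W i j = 1 := by
  rw [chain, Nat.sub_eq_zero_of_le (by omega), chainAux]

lemma chain_succ (W : ℕ → Matrix n n ℝ) {i j : ℕ} (h : i ≤ j + 1) :
    chain W i (j + 1) = W (j + 1) * chain W i j := by
  rw [chain, chain, show j + 1 + 1 - i = (j + 1 - i) + 1 by omega, chainAux,
    show i + (j + 1 - i) = j + 1 by omega]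

/-- The gradient of `½ ‖W L * ⋯ * W 1 - Φ‖²_F` with respect to `W l`. -/
def lossGrad (W : ℕ → Matrix n n ℝ) (Φ : Matrix n n ℝ) (L l : ℕ) : Matrix n n ℝ :=
  (chain W (l + 1) L)ᵀ * (chain W 1 L - Φ) * (chain W 1 (l - 1))ᵀ

end Chain

section Aligned

variable {n κ : Type*} [Fintype n]

def Aligned (W : ℕ → Matrix n n ℝ) (V : ℕ → Matrix n κ ℝ) (γ : ℕ → ℝ) (L : ℕ) : Prop :=
  ∀ l < L, W (l + 1) * V l = γ (l + 1) • V (l + 1) ∧ (W (l + 1))ᵀ * V (l + 1) = γ (l + 1) • V l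

namespace Aligned

variable {W : ℕ → Matrix n n ℝ} {V : ℕ → Matrix n κ ℝ} {γ : ℕ → ℝ} {L : ℕ}

lemma transpose_mul_self [Fintype κ] [DecidableEq κ] (h : Aligned W V γ L)
    (hγ : ∀ l < L, γ (l + 1) ≠ 0) (h₀ : (V 0)ᵀ * V 0 = 1) : ∀ l ≤ L, (V l)ᵀ * V l = 1 := by
  intro l
  induction l with
  | zero => exact fun _ => h₀
  | succ l ih =>
    intro hl
    apply smul_right_injective _ (hγ l hl)
    calc γ (l + 1) • ((V (l + 1))ᵀ * V (l + 1)) = (W (l + 1) * V l)ᵀ * V (l + 1) := by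
          rw [(h l hl).1, Matrix.transpose_smul, Matrix.smul_mul]
      _ = (V l)ᵀ * ((W (l + 1))ᵀ * V (l + 1)) := by
          rw [Matrix.transpose_mul, Matrix.mul_assoc]
      _ = γ (l + 1) • 1 := by rw [(h l hl).2, Matrix.mul_smul, ih (by omega)]

variable [DecidableEq n]

lemma chain_mul (h : Aligned W V γ L) {i j : ℕ} (hij : i ≤ j) (hj : j ≤ L) :
    chain W (i + 1) j * V i = (∏ k ∈ Ioc i j, γ k) • V j := by
  induction j, hij using Nat.le_induction with
  | base => simp [chain_of_lt]
  | succ j hij ih =>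
    rw [chain_succ W (by omega), Matrix.mul_assoc, ih (by omega), Matrix.mul_smul,
      (h j (by omega)).1, smul_smul, prod_Ioc_succ_top hij, mul_comm]

lemma transpose_chain_mul (h : Aligned W V γ L) {i j : ℕ} (hij : i ≤ j) (hj : j ≤ L) :
    (chain W (i + 1) j)ᵀ * V j = (∏ k ∈ Ioc i j, γ k) • V i := by
  induction j, hij using Nat.le_induction with
  | base => simp [chain_of_lt]
  | succ j hij ih =>
    rw [chain_succ W (by omega), Matrix.transpose_mul, Matrix.mul_assoc, (h j (by omega)).2,
      Matrix.mul_smul, ih (by omega), smul_smul, prod_Ioc_succ_top hij, mul_comm]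

lemma lossGrad_mul (h : Aligned W V γ L) {Φ : Matrix n n ℝ} (hΦ : Φ * V 0 = 0) {l : ℕ}
    (hl : l < L) :
    lossGrad W Φ L (l + 1) * V l
      = (γ (l + 1) * ∏ k ∈ (Icc 1 L).erase (l + 1), γ k ^ 2) • V (l + 1) := by
  have e1 : (chain W 1 l)ᵀ * V l = (∏ k ∈ Ioc 0 l, γ k) • V 0 :=
    h.transpose_chain_mul (Nat.zero_le l) hl.le
  have e2 : chain W 1 L * V 0 = (∏ k ∈ Ioc 0 L, γ k) • V L :=
    h.chain_mul (Nat.zero_le L) le_rfl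
  have e3 : (chain W (l + 2) L)ᵀ * V L = (∏ k ∈ Ioc (l + 1) L, γ k) • V (l + 1) :=
    h.transpose_chain_mul hl le_rfl
  rw [lossGrad, Nat.add_sub_cancel, Matrix.mul_assoc, e1, Matrix.mul_smul, Matrix.mul_assoc,
    Matrix.sub_mul, e2, hΦ, sub_zero, Matrix.mul_smul, e3, smul_smul, smul_smul,
    prod_Ioc_mul_prod_Ioc_mul_prod_Ioc γ hl]

lemma transpose_lossGrad_mul (h : Aligned W V γ L) {Φ : Matrix n n ℝ} (hΦ : Φᵀ * V L = 0)
    {l : ℕ} (hl : l < L) :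
    (lossGrad W Φ L (l + 1))ᵀ * V (l + 1)
      = (γ (l + 1) * ∏ k ∈ (Icc 1 L).erase (l + 1), γ k ^ 2) • V l := by
  have e1 : chain W (l + 2) L * V (l + 1) = (∏ k ∈ Ioc (l + 1) L, γ k) • V L :=
    h.chain_mul hl le_rfl
  have e2 : (chain W 1 L)ᵀ * V L = (∏ k ∈ Ioc 0 L, γ k) • V 0 :=
    h.transpose_chain_mul (Nat.zero_le L) le_rfl
  have e3 : chain W 1 l * V 0 = (∏ k ∈ Ioc 0 l, γ k) • V l :=
    h.chain_mul (Nat.zero_le l) hl.le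
  rw [lossGrad, Nat.add_sub_cancel, Matrix.transpose_mul, Matrix.transpose_mul,
    Matrix.transpose_transpose, Matrix.transpose_transpose, Matrix.mul_assoc, Matrix.mul_assoc,
    e1, Matrix.mul_smul, Matrix.mul_smul, Matrix.transpose_sub, Matrix.sub_mul, e2, hΦ, sub_zero,
    Matrix.mul_smul, e3, smul_smul, smul_smul, ← prod_Ioc_mul_prod_Ioc_mul_prod_Ioc γ hl]
  ring_nf

lemma step {W' : ℕ → Matrix n n ℝ} {Φ : Matrix n n ℝ} {a η : ℝ} (h : Aligned W V γ L)
    (hΦ₀ : Φ * V 0 = 0) (hΦL : Φᵀ * V L = 0)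
    (hW' : ∀ l < L, W' (l + 1) = a • W (l + 1) - η • lossGrad W Φ L (l + 1)) :
    Aligned W' V (fun l => γ l * (a - η * ∏ k ∈ (Icc 1 L).erase l, γ k ^ 2)) L := by
  intro l hl
  constructor
  · rw [hW' l hl, Matrix.sub_mul, Matrix.smul_mul, Matrix.smul_mul, (h l hl).1,
      h.lossGrad_mul hΦ₀ hl, smul_smul, smul_smul, ← sub_smul]
    ring_nf
  · rw [hW' l hl, Matrix.transpose_sub, Matrix.transpose_smul, Matrix.transpose_smul,
      Matrix.sub_mul, Matrix.smul_mul, Matrix.smul_mul, (h l hl).2,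
      h.transpose_lossGrad_mul hΦL hl, smul_smul, smul_smul, ← sub_smul]
    ring_nf

end Aligned

def frameChain (W : ℕ → Matrix n n ℝ) (ε : ℕ → ℝ) (V₀ : Matrix n κ ℝ) : ℕ → Matrix n κ ℝ
  | 0 => V₀
  | l + 1 => (ε (l + 1))⁻¹ • (W (l + 1) * frameChain W ε V₀ l)

lemma aligned_frameChain [DecidableEq n] {W : ℕ → Matrix n n ℝ} {ε : ℕ → ℝ} {L : ℕ}
    (hW : ∀ l < L, (W (l + 1))ᵀ * W (l + 1) = ε (l + 1) ^ 2 • 1)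
    (hε : ∀ l < L, ε (l + 1) ≠ 0) (V₀ : Matrix n κ ℝ) :
    Aligned W (frameChain W ε V₀) ε L := by
  intro l hl
  constructor
  · rw [frameChain, smul_inv_smul₀ (hε l hl)]
  · rw [frameChain, Matrix.mul_smul, ← Matrix.mul_assoc, hW l hl, Matrix.smul_mul,
      Matrix.one_mul, smul_smul, pow_two, inv_mul_cancel_left₀ (hε l hl)]

end Aligned

section Scales

variable {ι : Type*} [DecidableEq ι]

def scaleSeq (S : Finset ι) (a η : ℝ) (ε : ι → ℝ) : ℕ → ι → ℝ
  | 0 => ε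
  | t + 1 => fun l => scaleSeq S a η ε t l * (a - η * ∏ k ∈ S.erase l, scaleSeq S a η ε t k ^ 2)

lemma scaleSeq_bounds {S : Finset ι} {a η : ℝ} {ε : ι → ℝ} (hε : ∀ k ∈ S, 0 ≤ ε k) (hη : 0 ≤ η)
    (ha : a ≤ 1) (hstep : ∀ l ∈ S, η * ∏ k ∈ S.erase l, ε k ^ 2 ≤ a) (t : ℕ) :
    ∀ l ∈ S, 0 ≤ scaleSeq S a η ε t l ∧ scaleSeq S a η ε t l ≤ ε l * a ^ t := by
  induction t with
  | zero => exact fun l hl => ⟨hε l hl, by simp [scaleSeq]⟩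
  | succ t ih =>
    intro l hl
    set c := scaleSeq S a η ε t
    have ha₀ : 0 ≤ a := (mul_nonneg hη (prod_nonneg fun _ _ => sq_nonneg _)).trans (hstep l hl)
    have hc_le : ∀ k ∈ S, c k ≤ ε k := fun k hk =>
      (ih k hk).2.trans (mul_le_of_le_one_right (hε k hk) (pow_le_one₀ ha₀ ha))
    have hprod : ∏ k ∈ S.erase l, c k ^ 2 ≤ ∏ k ∈ S.erase l, ε k ^ 2 :=
      prod_le_prod (fun _ _ => sq_nonneg _) fun k hk =>
        pow_le_pow_left₀ (ih k (mem_of_mem_erase hk)).1 (hc_le k (mem_of_mem_erase hk)) 2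
    have hfac₀ : 0 ≤ a - η * ∏ k ∈ S.erase l, c k ^ 2 := by
      nlinarith [mul_le_mul_of_nonneg_left hprod hη, hstep l hl]
    have hfac₁ : a - η * ∏ k ∈ S.erase l, c k ^ 2 ≤ a :=
      sub_le_self _ (mul_nonneg hη (prod_nonneg fun _ _ => sq_nonneg _))
    refine ⟨mul_nonneg (ih l hl).1 hfac₀, ?_⟩
    calc c l * (a - η * ∏ k ∈ S.erase l, c k ^ 2) ≤ ε l * a ^ t * a :=
          mul_le_mul (ih l hl).2 hfac₁ hfac₀ (mul_nonneg (hε l hl) (pow_nonneg ha₀ t))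
      _ = ε l * a ^ (t + 1) := by ring

end Scales

section LowRank

variable {n κ : Type*} [Fintype n] [Fintype κ] [DecidableEq κ]

lemma exists_orthonormal_cols_mem {K : Submodule ℝ (EuclideanSpace ℝ n)} {m : ℕ}
    (hK : m ≤ Module.finrank ℝ K) :
    ∃ V : Matrix n (Fin m) ℝ, Vᵀ * V = 1 ∧ ∀ j, WithLp.toLp 2 (Vᵀ j) ∈ K := by
  let v : Fin m → K := stdOrthonormalBasis ℝ K ∘ Fin.castLE hK
  have hv : Orthonormal ℝ (fun j => (v j : EuclideanSpace ℝ n)) :=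
    Orthonormal.comp_linearIsometry
      ((stdOrthonormalBasis ℝ K).orthonormal.comp _ (Fin.castLE_injective hK)) K.subtypeₗᵢ
  refine ⟨Matrix.of fun i j => (v j : EuclideanSpace ℝ n) i, ?_, fun j => (v j).2⟩
  ext i j
  rw [orthonormal_iff_ite] at hv
  simpa [Matrix.mul_apply, Matrix.one_apply, PiLp.inner_apply, mul_comm] using hv i j

lemma frobNorm_smul {p q : Type*} [Fintype p] [Fintype q] (c : ℝ) (A : Matrix p q ℝ) :
    frobNorm (c • A) = |c| * frobNorm A := by
  rw [frobNorm, frobNorm, Matrix.transpose_smul, Matrix.smul_mul, Matrix.mul_smul, smul_smul,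
    trace_smul, smul_eq_mul, Real.sqrt_mul (mul_self_nonneg c), Real.sqrt_mul_self_eq_abs]

lemma frobNorm_mul_transpose {U V : Matrix n κ ℝ} (hU : Uᵀ * U = 1) (hV : Vᵀ * V = 1) :
    frobNorm (U * Vᵀ) = √(Fintype.card κ) := by
  rw [frobNorm, Matrix.transpose_mul, Matrix.transpose_transpose, Matrix.mul_assoc,
    ← Matrix.mul_assoc Uᵀ, hU, Matrix.one_mul, trace_mul_comm, hV, trace_one]

variable [DecidableEq n]

lemma finrank_ker_toLpLin_add_rank {p : Type*} [Fintype p] (A : Matrix p n ℝ) :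
    Module.finrank ℝ (LinearMap.ker (toLpLin 2 2 A)) + A.rank = Fintype.card n := by
  rw [toLpLin_eq_toLin, rank_eq_finrank_range_toLin A (PiLp.basisFun 2 ℝ p) (PiLp.basisFun 2 ℝ n),
    add_comm, LinearMap.finrank_range_add_finrank_ker, finrank_euclideanSpace]

lemma exists_orthonormal_cols_mul_eq_zero {p q : Type*} [Fintype p] [Fintype q]
    (A : Matrix p n ℝ) (B : Matrix q n ℝ) {m : ℕ} (h : A.rank + B.rank + m ≤ Fintype.card n) :
    ∃ V : Matrix n (Fin m) ℝ, Vᵀ * V = 1 ∧ A * V = 0 ∧ B * V = 0 := by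
  let KA := LinearMap.ker (toLpLin 2 2 A)
  let KB := LinearMap.ker (toLpLin 2 2 B)
  have hK : m ≤ Module.finrank ℝ ↥(KA ⊓ KB) := by
    have := Submodule.finrank_sup_add_finrank_inf_eq KA KB
    have : Module.finrank ℝ ↥(KA ⊔ KB) ≤ Fintype.card n :=
      (Submodule.finrank_le _).trans_eq finrank_euclideanSpace
    have : Module.finrank ℝ KA + A.rank = Fintype.card n := finrank_ker_toLpLin_add_rank A
    have : Module.finrank ℝ KB + B.rank = Fintype.card n := finrank_ker_toLpLin_add_rank B
    omega
  obtain ⟨V, hV, hVK⟩ := exists_orthonormal_cols_mem hK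
  refine ⟨V, hV, ?_, ?_⟩ <;> ext i j
  · have := congr_arg (fun x : EuclideanSpace ℝ p => x i) (Submodule.mem_inf.1 (hVK j)).1
    simpa [Matrix.mul_apply, Matrix.mulVec, dotProduct] using this
  · have := congr_arg (fun x : EuclideanSpace ℝ q => x i) (Submodule.mem_inf.1 (hVK j)).2
    simpa [Matrix.mul_apply, Matrix.mulVec, dotProduct] using this

lemma rank_one_sub_mul_transpose_add_card_le {V : Matrix n κ ℝ} (hV : Vᵀ * V = 1) :
    (1 - V * Vᵀ).rank + Fintype.card κ ≤ Fintype.card n := by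
  have hzero : (1 - V * Vᵀ) * V = 0 := by
    rw [Matrix.sub_mul, Matrix.one_mul, Matrix.mul_assoc, hV, Matrix.mul_one, sub_self]
  have hrank : V.rank = Fintype.card κ := by rw [← rank_transpose_mul_self, hV, rank_one]
  simpa [hrank] using rank_add_rank_le_card_of_mul_eq_zero hzero

lemma exists_rank_add_card_le_frobNorm_sub_eq {W : Matrix n n ℝ} {U V : Matrix n κ ℝ} {c : ℝ}
    (hU : Uᵀ * U = 1) (hV : Vᵀ * V = 1) (hWV : W * V = c • U) :
    ∃ A : Matrix n n ℝ, A.rank + Fintype.card κ ≤ Fintype.card n ∧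
      frobNorm (W - A) = |c| * √(Fintype.card κ) := by
  refine ⟨W * (1 - V * Vᵀ), ?_, ?_⟩
  · have := rank_mul_le_right W (1 - V * Vᵀ)
    have := rank_one_sub_mul_transpose_add_card_le hV
    omega
  · rw [Matrix.mul_sub, Matrix.mul_one, sub_sub_cancel, ← Matrix.mul_assoc, hWV, Matrix.smul_mul,
      frobNorm_smul, frobNorm_mul_transpose hU hV]

end LowRank


section GradientDescent

variable {n : Type*} [Fintype n] [DecidableEq n]

lemma exists_frames_aligned_of_gradientDescent {Φ : Matrix n n ℝ} {m L : ℕ}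
    (hΦ : 2 * Φ.rank + m ≤ Fintype.card n) {ε : ℕ → ℝ} (hε : ∀ l < L, ε (l + 1) ≠ 0)
    {W : ℕ → ℕ → Matrix n n ℝ} (hW₀ : ∀ l < L, (W 0 (l + 1))ᵀ * W 0 (l + 1) = ε (l + 1) ^ 2 • 1)
    {a η : ℝ}
    (hW : ∀ t, ∀ l < L, W (t + 1) (l + 1) = a • W t (l + 1) - η • lossGrad (W t) Φ L (l + 1)) :
    ∃ V : ℕ → Matrix n (Fin m) ℝ,
      (∀ l ≤ L, (V l)ᵀ * V l = 1) ∧ ∀ t, Aligned (W t) V (scaleSeq (Icc 1 L) a η ε t) L := by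
  obtain ⟨V₀, hV₀, hΦV₀, hΦQV₀⟩ :=
    exists_orthonormal_cols_mul_eq_zero Φ (Φᵀ * chain (W 0) 1 L) (m := m) (by
      have := rank_mul_le_left Φᵀ (chain (W 0) 1 L)
      rw [rank_transpose] at this
      omega)
  set V := frameChain (W 0) ε V₀
  have hal₀ : Aligned (W 0) V ε L := aligned_frameChain hW₀ hε V₀
  have hΦL : Φᵀ * V L = 0 := by
    have hQ : chain (W 0) 1 L * V₀ = (∏ k ∈ Ioc 0 L, ε k) • V L :=
      hal₀.chain_mul (Nat.zero_le L) le_rfl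
    rw [Matrix.mul_assoc, hQ, Matrix.mul_smul] at hΦQV₀
    refine (smul_eq_zero.1 hΦQV₀).resolve_left (prod_ne_zero_iff.2 fun k hk => ?_)
    obtain ⟨hk₀, hkL⟩ := mem_Ioc.1 hk
    obtain ⟨l, rfl⟩ : ∃ l, k = l + 1 := ⟨k - 1, by omega⟩
    exact hε l (by omega)
  refine ⟨V, hal₀.transpose_mul_self hε hV₀, fun t => ?_⟩
  induction t with
  | zero => exact hal₀
  | succ t ih => exact ih.step hΦV₀ hΦL (hW t)

end GradientDescent

theorem statement15_general
    (r m : ℕ) (L : ℕ)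
    (Φ : Matrix (Fin (2*r + m)) (Fin (2*r + m)) ℝ) (hΦ : Φ.rank ≤ r)
    (ε : ℕ → ℝ) (hε : ∀ l, 1 ≤ l → l ≤ L → 0 < ε l)
    (η lam : ℝ) (hη : 0 < η) (hlam : 0 ≤ lam)
    (W : ℕ → ℕ → Matrix (Fin (2*r + m)) (Fin (2*r + m)) ℝ)
    (hW0 : ∀ l, 1 ≤ l → l ≤ L →
      W 0 l * (W 0 l)ᵀ = (ε l)^2 • (1 : Matrix (Fin (2*r + m)) (Fin (2*r + m)) ℝ) ∧
      (W 0 l)ᵀ * W 0 l = (ε l)^2 • (1 : Matrix (Fin (2*r + m)) (Fin (2*r + m)) ℝ))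
    (hWupd : ∀ t l, 1 ≤ l → l ≤ L →
      W (t+1) l = (1 - η * lam) • W t l
        - η • ((chain (W t) (l+1) L)ᵀ * (chain (W t) 1 L - Φ) * (chain (W t) 1 (l-1))ᵀ))
    (hstep : ∀ l, 1 ≤ l → l ≤ L →
      η * (lam + ∏ k ∈ (Finset.Icc 1 L).erase l, (ε k)^2) ≤ 1) :
    (∀ l, 1 ≤ l → l ≤ L → ∀ t : ℕ,
      ∃ A : Matrix (Fin (2*r + m)) (Fin (2*r + m)) ℝ,
        A.rank ≤ 2*r ∧
        frobNorm (W t l - A) ≤ Real.sqrt (m : ℝ) * ε l * (1 - η * lam)^t) ∧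
    (0 < lam → ∀ l, 1 ≤ l → l ≤ L →
      ∃ A : ℕ → Matrix (Fin (2*r + m)) (Fin (2*r + m)) ℝ,
        (∀ t, (A t).rank ≤ 2*r) ∧
        Filter.Tendsto (fun t : ℕ => frobNorm (W t l - A t)) Filter.atTop (nhds 0)) := by
  have hε' : ∀ k ∈ Icc 1 L, 0 < ε k := fun k hk => hε k (mem_Icc.1 hk).1 (mem_Icc.1 hk).2
  have hstep' : ∀ l ∈ Icc 1 L, η * ∏ k ∈ (Icc 1 L).erase l, ε k ^ 2 ≤ 1 - η * lam := fun l hl => by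
    linarith [hstep l (mem_Icc.1 hl).1 (mem_Icc.1 hl).2]
  obtain ⟨V, hV, hal⟩ := exists_frames_aligned_of_gradientDescent (m := m)
    (by rw [Fintype.card_fin]; omega) (fun l hl => (hε (l + 1) (by omega) hl).ne')
    (fun l hl => (hW0 (l + 1) (by omega) hl).2) (fun t l hl => hWupd t (l + 1) (by omega) hl)
  have hc := scaleSeq_bounds (fun k hk => (hε' k hk).le) hη.le (by nlinarith) hstep'
  have hbound : ∀ l, 1 ≤ l → l ≤ L → ∀ t : ℕ, ∃ A : Matrix (Fin (2*r + m)) (Fin (2*r + m)) ℝ,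
      A.rank ≤ 2*r ∧ frobNorm (W t l - A) ≤ Real.sqrt (m : ℝ) * ε l * (1 - η * lam)^t := by
    intro l hl₁ hlL t
    obtain ⟨k, rfl⟩ : ∃ k, l = k + 1 := ⟨l - 1, by omega⟩
    obtain ⟨A, hA, hdist⟩ := exists_rank_add_card_le_frobNorm_sub_eq (hV (k + 1) hlL)
      (hV k (by omega)) (hal t k (by omega)).1
    have hck := hc t (k + 1) (mem_Icc.2 ⟨hl₁, hlL⟩)
    refine ⟨A, by simp only [Fintype.card_fin] at hA; omega, ?_⟩
    rw [hdist, abs_of_nonneg hck.1, Fintype.card_fin]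
    calc _ ≤ ε (k + 1) * (1 - η * lam) ^ t * √(m : ℝ) :=
          mul_le_mul_of_nonneg_right hck.2 (Real.sqrt_nonneg _)
      _ = √(m : ℝ) * ε (k + 1) * (1 - η * lam) ^ t := by ring
  refine ⟨hbound, fun hlam_pos l hl₁ hlL => ?_⟩
  choose A hA hdist using hbound l hl₁ hlL
  have hdecay : Tendsto (fun t : ℕ => (1 - η * lam) ^ t) atTop (nhds 0) :=
    have hprod : 0 ≤ ∏ k ∈ (Icc 1 L).erase l, ε k ^ 2 := prod_nonneg fun k _ => sq_nonneg (ε k)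
    tendsto_pow_atTop_nhds_zero_of_lt_one
      (by nlinarith [hstep' l (mem_Icc.2 ⟨hl₁, hlL⟩)]) (by nlinarith)
  exact ⟨A, hA, squeeze_zero (fun t => Real.sqrt_nonneg _) hdist
    (by simpa using hdecay.const_mul (√(m : ℝ) * ε l))⟩

/-- low-rank bias: every GD iterate `W_l(t)` is within Frobenius
distance `√m·ε_l·(1−ηλ)ᵗ` of a matrix of rank at most `2r`; in particular, when
`λ > 0` the Frobenius distance from `W_l(t)` to the set of matrices of rank at most
`2r` tends to `0` as `t → ∞`. Here `d = 2r + m` with `m > 0`. -/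
theorem statement15
    (r m : ℕ) (hm : 0 < m) (L : ℕ) (hL : 1 ≤ L)
    (Φ : Matrix (Fin (2*r + m)) (Fin (2*r + m)) ℝ) (hΦ : Φ.rank ≤ r)
    (ε : ℕ → ℝ) (hε : ∀ l, 1 ≤ l → l ≤ L → 0 < ε l)
    (η lam : ℝ) (hη : 0 < η) (hlam : 0 ≤ lam)
    (W : ℕ → ℕ → Matrix (Fin (2*r + m)) (Fin (2*r + m)) ℝ)
    (hW0 : ∀ l, 1 ≤ l → l ≤ L →
      W 0 l * (W 0 l)ᵀ = (ε l)^2 • (1 : Matrix (Fin (2*r + m)) (Fin (2*r + m)) ℝ) ∧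
      (W 0 l)ᵀ * W 0 l = (ε l)^2 • (1 : Matrix (Fin (2*r + m)) (Fin (2*r + m)) ℝ))
    (hWupd : ∀ t l, 1 ≤ l → l ≤ L →
      W (t+1) l = (1 - η * lam) • W t l
        - η • ((chain (W t) (l+1) L)ᵀ * (chain (W t) 1 L - Φ) * (chain (W t) 1 (l-1))ᵀ))
    (hstep : ∀ l, 1 ≤ l → l ≤ L →
      η * (lam + ∏ k ∈ (Finset.Icc 1 L).erase l, (ε k)^2) ≤ 1) :
    (∀ l, 1 ≤ l → l ≤ L → ∀ t : ℕ,
      ∃ A : Matrix (Fin (2*r + m)) (Fin (2*r + m)) ℝ,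
        A.rank ≤ 2*r ∧
        frobNorm (W t l - A) ≤ Real.sqrt (m : ℝ) * ε l * (1 - η * lam)^t) ∧
    (0 < lam → ∀ l, 1 ≤ l → l ≤ L →
      ∃ A : ℕ → Matrix (Fin (2*r + m)) (Fin (2*r + m)) ℝ,
        (∀ t, (A t).rank ≤ 2*r) ∧
        Filter.Tendsto (fun t : ℕ => frobNorm (W t l - A t)) Filter.atTop (nhds 0)) :=
  statement15_general r m L Φ hΦ ε hε η lam hη hlam W hW0 hWupd hstep
end
end
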